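/- arXiv:2005.07316 — 2 statements merged into one kernel-verified Lean document; each statement's English description precedes it below -/
import Mathlib

section
/- Let n ≥ 2 and let x_1, …, x_n be pairwise distinct real numbers. For X_{n,i} = ∏_{j ≠ i} (x_i - x_j) and any integer k ≥ 1-n, the complete homogeneous symmetric polynomial of degree k satisfies ∑_{a ∈ A_{n,k}} x_1^{a_1} x_2^{a_2} ⋯ x_n^{a_n} = ∑_{i=1}^{n} x_i^{k+n-1} / X_{n,i}, where A_{n,k} is the set of n-tuples of nonnegative integers summing to k (and the left side is interpreted as 0 when k < 0, except the identity still holds for 1-n ≤ k ≤ -1 where the right side vanishes). -/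
/-!
Write `h_k(s)` for the complete homogeneous symmetric polynomial of degree `k` in the `x i`,
`i ∈ s`, and `D_m(s) = ∑_{i ∈ s} x_i^m / ∏_{j ∈ s, j ≠ i} (x_i - x_j)` for the divided difference
of `t ↦ t^m` at the nodes `x i`. Splitting off the monomials that contain `x_a` gives
`h_{k+1}(a, s) = h_{k+1}(s) + x_a h_k(a, s)`, hence for `a ≠ b` outside `t`
`(x_a - x_b) h_k(a, b, t) = h_{k+1}(a, t) - h_{k+1}(b, t)`,
which is exactly the divided-difference recursion satisfied by `D_m`. Both sides agree on sets
with at most one element, so by strong induction on `s` they agree whenever `k + #s = m + 1`.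
-/

open Finset

variable {ι : Type*}

section CommSemiring

variable [DecidableEq ι] {R : Type*} [CommSemiring R]

def completeHomogeneous (x : ι → R) (s : Finset ι) (k : ℤ) : R :=
  if 0 ≤ k then ∑ f ∈ s.piAntidiag k.toNat, ∏ i ∈ s, x i ^ f i else 0

variable {x : ι → R}

@[simp]
lemma completeHomogeneous_natCast (s : Finset ι) (k : ℕ) :
    completeHomogeneous x s k = ∑ f ∈ s.piAntidiag k, ∏ i ∈ s, x i ^ f i := by
  simp [completeHomogeneous]

lemma completeHomogeneous_of_neg (s : Finset ι) {k : ℤ} (hk : k < 0) :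
    completeHomogeneous x s k = 0 := by
  simp [completeHomogeneous, not_le.2 hk]

lemma completeHomogeneous_zero (s : Finset ι) : completeHomogeneous x s 0 = 1 := by
  simpa using completeHomogeneous_natCast (x := x) s 0

lemma completeHomogeneous_empty_of_pos {k : ℤ} (hk : 0 < k) :
    completeHomogeneous x ∅ k = 0 := by
  lift k to ℕ using hk.le
  simp [Nat.pos_iff_ne_zero.1 (by exact_mod_cast hk)]

lemma completeHomogeneous_insert_natCast {a : ι} {s : Finset ι} (ha : a ∉ s) (k : ℕ) :
    completeHomogeneous x (insert a s) k =
      ∑ p ∈ antidiagonal k, x a ^ p.1 * completeHomogeneous x s p.2 := by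
  rw [completeHomogeneous_natCast, ← cons_eq_insert _ _ ha, piAntidiag_cons ha, sum_disjiUnion]
  refine sum_congr rfl fun p _ => ?_
  rw [sum_map, completeHomogeneous_natCast, mul_sum]
  refine sum_congr rfl fun g hg => ?_
  have hga : g a = 0 := by_contra fun h => ha ((mem_piAntidiag.1 hg).2 a h)
  rw [prod_cons]
  congr 1
  · simp [hga]
  · exact prod_congr rfl fun j hj => by simp [ne_of_mem_of_not_mem hj ha]

lemma completeHomogeneous_insert_add_one {a : ι} {s : Finset ι} (ha : a ∉ s) (k : ℤ) :
    completeHomogeneous x (insert a s) (k + 1) =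
      completeHomogeneous x s (k + 1) + x a * completeHomogeneous x (insert a s) k := by
  obtain hk | hk := le_or_gt 0 k
  · lift k to ℕ using hk
    rw [← Nat.cast_succ, completeHomogeneous_insert_natCast ha,
      completeHomogeneous_insert_natCast ha, Nat.antidiagonal_succ, sum_cons, sum_map, mul_sum]
    simp [pow_succ, mul_left_comm, mul_assoc]
  · obtain rfl | hk' : k = -1 ∨ k < -1 := by omega
    · simp [completeHomogeneous_zero, completeHomogeneous_of_neg _ (show (-1 : ℤ) < 0 by simp)]
    · simp [completeHomogeneous_of_neg _ hk, completeHomogeneous_of_neg _ (show k + 1 < 0 by omega)]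

lemma completeHomogeneous_singleton (a : ι) (k : ℕ) : completeHomogeneous x {a} k = x a ^ k := by
  induction k with
  | zero => simp [completeHomogeneous_zero]
  | succ k ih =>
    have h := completeHomogeneous_insert_add_one (x := x) (notMem_empty a) k
    rw [insert_empty, completeHomogeneous_empty_of_pos (by omega), ih] at h
    rw [Nat.cast_succ, h, zero_add, pow_succ, mul_comm]

end CommSemiring

lemma sub_mul_completeHomogeneous_insert_insert [DecidableEq ι] {R : Type*} [CommRing R]
    {x : ι → R} {a b : ι} {t : Finset ι} (hab : a ≠ b) (ha : a ∉ t) (hb : b ∉ t) (k : ℤ) :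
    (x a - x b) * completeHomogeneous x (insert a (insert b t)) k =
      completeHomogeneous x (insert a t) (k + 1) - completeHomogeneous x (insert b t) (k + 1) := by
  have h₁ := completeHomogeneous_insert_add_one (x := x) (a := a) (s := insert b t)
    (by simp [hab, ha]) k
  have h₂ := completeHomogeneous_insert_add_one (x := x) (a := b) (s := insert a t)
    (by simp [hab.symm, hb]) k
  rw [insert_comm] at h₂
  linear_combination h₂ - h₁

section Field

variable {K : Type*} [Field K] {x : ι → K}

lemma prod_sub_ne_zero_of_injective (hx : Function.Injective x) {i : ι} {s : Finset ι}
    (hi : i ∉ s) : ∏ j ∈ s, (x i - x j) ≠ 0 :=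
  prod_ne_zero_iff.2 fun _ hj => sub_ne_zero.2 (hx.ne (ne_of_mem_of_not_mem hj hi).symm)

variable [DecidableEq ι]

def dividedDifference (x f : ι → K) (s : Finset ι) : K :=
  ∑ i ∈ s, f i / ∏ j ∈ s.erase i, (x i - x j)

lemma dividedDifference_insert (f : ι → K) {a : ι} {s : Finset ι} (ha : a ∉ s) :
    dividedDifference x f (insert a s) =
      f a / ∏ j ∈ s, (x a - x j) + dividedDifference x (fun i => f i / (x i - x a)) s := by
  rw [dividedDifference, sum_insert ha, erase_insert ha, dividedDifference]
  congr 1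
  refine sum_congr rfl fun i hi => ?_
  rw [erase_insert_of_ne (ne_of_mem_of_not_mem hi ha).symm,
    prod_insert fun h => ha (mem_of_mem_erase h), div_div]

lemma dividedDifference_insert_sub_insert (hx : Function.Injective x) (f : ι → K) {a b : ι}
    {t : Finset ι} (hab : a ≠ b) (ha : a ∉ t) (hb : b ∉ t) :
    dividedDifference x f (insert a t) - dividedDifference x f (insert b t) =
      (x a - x b) * dividedDifference x f (insert a (insert b t)) := by
  have hab' : x a - x b ≠ 0 := sub_ne_zero.2 (hx.ne hab)
  have hba' : x b - x a ≠ 0 := sub_ne_zero.2 (hx.ne hab.symm)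
  have hPa := prod_sub_ne_zero_of_injective hx ha
  have hPb := prod_sub_ne_zero_of_injective hx hb
  have hends : f a / ∏ j ∈ t, (x a - x j) - f b / ∏ j ∈ t, (x b - x j) = (x a - x b) *
      (f a / ((x a - x b) * ∏ j ∈ t, (x a - x j)) + f b / (x b - x a) / ∏ j ∈ t, (x b - x j)) := by
    field_simp
    ring
  have htails : dividedDifference x (fun i => f i / (x i - x a)) t -
      dividedDifference x (fun i => f i / (x i - x b)) t =
      (x a - x b) * dividedDifference x (fun i => f i / (x i - x a) / (x i - x b)) t := by
    rw [dividedDifference, dividedDifference, dividedDifference, ← sum_sub_distrib, mul_sum]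
    refine sum_congr rfl fun i hi => ?_
    have hia : x i - x a ≠ 0 := sub_ne_zero.2 (hx.ne (ne_of_mem_of_not_mem hi ha))
    have hib : x i - x b ≠ 0 := sub_ne_zero.2 (hx.ne (ne_of_mem_of_not_mem hi hb))
    have hQ := prod_sub_ne_zero_of_injective hx (notMem_erase i t)
    field_simp
    ring
  rw [dividedDifference_insert f ha, dividedDifference_insert f hb,
    dividedDifference_insert f (by simp [hab, ha]), dividedDifference_insert _ hb, prod_insert hb]
  linear_combination htails + hends

-- `m` stands for the exponent `k + #s - 1`, kept in `ℕ` so that no truncated subtraction occurs.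
theorem completeHomogeneous_eq_dividedDifference_pow (hx : Function.Injective x) (s : Finset ι)
    (k : ℤ) (m : ℕ) (hkm : k + #s = m + 1) :
    completeHomogeneous x s k = dividedDifference x (x · ^ m) s := by
  induction s using Finset.strongInduction generalizing k m with
  | H s ih =>
  obtain rfl | hs := s.eq_empty_or_nonempty
  · simp [completeHomogeneous_empty_of_pos (show 0 < k by simp at hkm; omega), dividedDifference]
  obtain ⟨a, rfl⟩ | hs := hs.exists_eq_singleton_or_nontrivial
  · obtain rfl : k = m := by simpa using hkm
    rw [completeHomogeneous_singleton]
    simp [dividedDifference]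
  obtain ⟨t, a, hat, b, hbt, hab : a ≠ b, rfl⟩ := hs.exists_cons_eq
  simp only [cons_eq_insert] at ih hkm ⊢
  have ha : a ∉ insert b t := by simp [hab, hat]
  have hb : b ∉ insert a t := by simp [hab.symm, hbt]
  rw [card_insert_of_notMem ha, card_insert_of_notMem hbt] at hkm
  refine mul_left_cancel₀ (sub_ne_zero.2 (hx.ne hab)) ?_
  rw [sub_mul_completeHomogeneous_insert_insert hab hat hbt,
    ← dividedDifference_insert_sub_insert hx _ hab hat hbt,
    ih _ (insert_comm a b t ▸ ssubset_insert hb) (k + 1) m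
      (by rw [card_insert_of_notMem hat]; omega),
    ih _ (ssubset_insert ha) (k + 1) m (by rw [card_insert_of_notMem hbt]; omega)]

end Field

theorem stmt_8_general (n : ℕ) (x : Fin n → ℝ) (hx : Function.Injective x)
    (k : ℤ) (hk : 1 - (n : ℤ) ≤ k) :
    (if 0 ≤ k then
        ∑ a ∈ Finset.Nat.antidiagonalTuple n k.toNat, ∏ i, x i ^ a i
      else 0) =
      ∑ i, x i ^ ((k + n - 1).toNat) / ∏ j ∈ Finset.univ.erase i, (x i - x j) := by
  have h := completeHomogeneous_eq_dividedDifference_pow hx univ k (k + n - 1).toNat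
    (by rw [card_univ, Fintype.card_fin]; omega)
  simpa [completeHomogeneous, dividedDifference, piAntidiag_univ_fin_eq_antidiagonalTuple] using h

/-- Partial-fractions identity for complete homogeneous symmetric polynomials: for
pairwise distinct `x₁,…,xₙ`, `X_{n,i} = ∏_{j≠i}(xᵢ - xⱼ)`, and any integer `k ≥ 1-n`,
`∑_{a ∈ A_{n,k}} x₁^{a₁}⋯xₙ^{aₙ} = ∑ᵢ xᵢ^{k+n-1} / X_{n,i}`, where the left side is `0`
when `k < 0`. -/
theorem stmt_8 (n : ℕ) (hn : 2 ≤ n) (x : Fin n → ℝ) (hx : Function.Injective x)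
    (k : ℤ) (hk : 1 - (n : ℤ) ≤ k) :
    (if 0 ≤ k then
        ∑ a ∈ Finset.Nat.antidiagonalTuple n k.toNat, ∏ i, x i ^ a i
      else 0) =
      ∑ i, x i ^ ((k + n - 1).toNat) / ∏ j ∈ Finset.univ.erase i, (x i - x j) :=
  stmt_8_general n x hx k hk
end

section
/- Let M be an s × s upper-triangular row-stochastic real matrix with M_{ss} = 1 and M_{ii} < 1 for i < s. Then the matrix M - 𝟙 e_s^T - I is invertible, and the expected absorption time starting from state 1, namely ∑_{r=1}^∞ r((M^r)_{1s} - (M^{r-1})_{1s}), equals ((M - 𝟙 e_s^T - I)^{-1})_{1s} + 1, where 𝟙 = (1,…,1)^T and e_s = (0,…,0,1)^T. -/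
/-!
Let `E = 𝟙 eₛᵀ` (`lastColOnes s`). Since `M 𝟙 = 𝟙` and the last row of `M` is `eₛᵀ`, the
idempotent `E` satisfies `M E = E M = E`, so `A = M - E` has `Aʳ = Mʳ - E` for `r ≥ 1`. The matrix
`A` is upper triangular with diagonal entries in `[0, 1)`, hence its powers decay geometrically
(column by column, along the triangular order) and `∑ Aʳ = (1 - A)⁻¹ = -N⁻¹`. Summation by parts
turns the expected absorption time into the sum of the tail probabilities
`1 - (Mʳ)₁ₛ = [r = 0] - (Aʳ)₁ₛ`, which is `1 - ((1 - A)⁻¹)₁ₛ = N⁻¹₁ₛ + 1`.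
-/

open Finset Matrix

theorem pow_mul_eq_self_of_mul_eq_self {R : Type*} [Monoid R] {a e : R} (h : a * e = e) (n : ℕ) :
    a ^ n * e = e := by
  induction n with
  | zero => rw [pow_zero, one_mul]
  | succ n ih => rw [pow_succ, mul_assoc, h, ih]

theorem sub_pow_succ_of_mul_eq_self {R : Type*} [Ring R] {a e : R}
    (hae : a * e = e) (hea : e * a = e) (hee : e * e = e) (n : ℕ) :
    (a - e) ^ (n + 1) = a ^ (n + 1) - e := by
  induction n with
  | zero => rw [zero_add, pow_one, pow_one]
  | succ n ih =>
    rw [pow_succ, ih, sub_mul, mul_sub, mul_sub, ← pow_succ, hea, hee,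
      pow_mul_eq_self_of_mul_eq_self hae]
    abel

theorem le_max_mul_pow_of_le_mul_add {u : ℕ → ℝ} {c ρ D : ℝ} (hc : 0 ≤ c) (hcρ : c < ρ)
    (hu : ∀ r, u (r + 1) ≤ c * u r + D * ρ ^ r) (r : ℕ) :
    u r ≤ max (u 0) (D / (ρ - c)) * ρ ^ r := by
  set C := max (u 0) (D / (ρ - c))
  have hD : D ≤ C * (ρ - c) := (div_le_iff₀ (sub_pos.2 hcρ)).1 (le_max_right _ _)
  induction r with
  | zero => simp [C]
  | succ r ih =>
    have hρ : 0 ≤ ρ ^ r := pow_nonneg (hc.trans hcρ.le) r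
    calc u (r + 1) ≤ c * u r + D * ρ ^ r := hu r
      _ ≤ c * (C * ρ ^ r) + C * (ρ - c) * ρ ^ r := by gcongr
      _ = C * ρ ^ (r + 1) := by ring

namespace Matrix.BlockTriangular

variable {ι : Type*} [Fintype ι] [LinearOrder ι] {A : Matrix ι ι ℝ}

theorem abs_pow_succ_apply_le (hA : A.BlockTriangular id) {j : ι} {c ρ : ℝ} (hdiag : |A j j| ≤ c)
    (K : ι → ℝ) (hK : ∀ k < j, ∀ r i, |(A ^ r) i k| ≤ K k * ρ ^ r) (hρ : 0 ≤ ρ) (r : ℕ) (i : ι) :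
    |(A ^ (r + 1)) i j| ≤ c * |(A ^ r) i j| + (∑ k, |K k| * |A k j|) * ρ ^ r := by
  have hoff : ∀ k ∈ univ.erase j, |(A ^ r) i k * A k j| ≤ |K k| * |A k j| * ρ ^ r := by
    intro k hk
    rcases lt_or_gt_of_ne (ne_of_mem_erase hk) with hkj | hjk
    · rw [abs_mul, mul_right_comm]
      gcongr
      exact (hK k hkj r i).trans (by gcongr; exact le_abs_self _)
    · rw [hA hjk, mul_zero, abs_zero]
      positivity
  rw [pow_succ, mul_apply, ← add_sum_erase _ _ (mem_univ j), sum_mul]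
  calc |(A ^ r) i j * A j j + ∑ k ∈ univ.erase j, (A ^ r) i k * A k j|
      ≤ |(A ^ r) i j| * |A j j| + ∑ k ∈ univ.erase j, |K k| * |A k j| * ρ ^ r :=
        (abs_add_le _ _).trans <| by
          rw [abs_mul]
          gcongr
          exact (abs_sum_le_sum_abs _ _).trans (sum_le_sum hoff)
    _ ≤ c * |(A ^ r) i j| + ∑ k, |K k| * |A k j| * ρ ^ r := by
        rw [mul_comm c]
        gcongr
        exact erase_subset _ _

theorem exists_abs_pow_apply_le (hA : A.BlockTriangular id) {c ρ : ℝ} (hc : 0 ≤ c) (hcρ : c < ρ)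
    (hdiag : ∀ i, |A i i| ≤ c) (j : ι) : ∃ K, ∀ r i, |(A ^ r) i j| ≤ K * ρ ^ r := by
  -- `ρ > c` leaves room to absorb the geometric contributions of the earlier columns.
  induction j using WellFoundedLT.induction with
  | _ j ih =>
    choose! K hK using ih
    set D := ∑ k, |K k| * |A k j|
    refine ⟨max 1 (D / (ρ - c)), fun r i => ?_⟩
    have hρ : 0 ≤ ρ := hc.trans hcρ.le
    calc |(A ^ r) i j| ≤ max |(A ^ 0) i j| (D / (ρ - c)) * ρ ^ r :=
          le_max_mul_pow_of_le_mul_add (u := fun r => |(A ^ r) i j|) hc hcρ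
            (abs_pow_succ_apply_le hA (hdiag j) K hK hρ · i) r
      _ ≤ max 1 (D / (ρ - c)) * ρ ^ r := by
          gcongr
          rw [pow_zero, one_apply]
          split_ifs <;> simp

theorem exists_abs_pow_apply_le_geometric (hA : A.BlockTriangular id) (hdiag : ∀ i, |A i i| < 1) :
    ∃ K ρ, 0 ≤ ρ ∧ ρ < 1 ∧ ∀ r i j, |(A ^ r) i j| ≤ K * ρ ^ r := by
  -- A supremum in `ℝ≥0`, so that an empty index type needs no separate case.
  set c : NNReal := univ.sup fun i => ‖A i i‖₊
  have hc : c < 1 := (Finset.sup_lt_iff zero_lt_one).2 fun i _ => by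
    rw [← NNReal.coe_lt_coe, coe_nnnorm, NNReal.coe_one, Real.norm_eq_abs]
    exact hdiag i
  have hdiag_le : ∀ i, |A i i| ≤ c := fun i => by
    rw [← Real.norm_eq_abs, ← coe_nnnorm, NNReal.coe_le_coe]
    exact le_sup (f := fun i => ‖A i i‖₊) (mem_univ i)
  have hcρ : (c : ℝ) < (1 + c) / 2 := by linarith [NNReal.coe_lt_coe.2 hc, NNReal.coe_one]
  choose K hK using exists_abs_pow_apply_le hA c.2 hcρ hdiag_le
  refine ⟨∑ j, |K j|, (1 + c) / 2, by positivity, by linarith [NNReal.coe_lt_coe.2 hc],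
    fun r i j => ?_⟩
  calc |(A ^ r) i j| ≤ K j * ((1 + c) / 2) ^ r := hK j r i
    _ ≤ (∑ j, |K j|) * ((1 + c) / 2) ^ r := by
        gcongr
        exact (le_abs_self _).trans (single_le_sum (fun k _ => abs_nonneg (K k)) (mem_univ j))

theorem summable_pow (hA : A.BlockTriangular id) (hdiag : ∀ i, |A i i| < 1) :
    Summable fun r => A ^ r := by
  obtain ⟨K, ρ, hρ0, hρ1, hK⟩ := exists_abs_pow_apply_le_geometric hA hdiag
  refine Pi.summable.2 fun i => Pi.summable.2 fun j => ?_
  exact ((summable_geometric_of_lt_one hρ0 hρ1).mul_left K).of_norm_bounded (hK · i j)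

theorem summable_natCast_mul_pow_apply (hA : A.BlockTriangular id) (hdiag : ∀ i, |A i i| < 1)
    (i j : ι) : Summable fun r : ℕ => (r : ℝ) * (A ^ r) i j := by
  obtain ⟨K, ρ, hρ0, hρ1, hK⟩ := exists_abs_pow_apply_le_geometric hA hdiag
  have hgeom : Summable fun r : ℕ => K * ((r : ℝ) ^ 1 * ρ ^ r) :=
    (summable_pow_mul_geometric_of_norm_lt_one 1 (by rwa [Real.norm_of_nonneg hρ0])).mul_left K
  refine hgeom.of_norm_bounded fun r => ?_
  rw [norm_mul, Real.norm_natCast, pow_one, Real.norm_eq_abs, mul_left_comm]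
  exact mul_le_mul_of_nonneg_left (hK r i j) r.cast_nonneg

end Matrix.BlockTriangular

theorem tsum_natCast_mul_sub_eq_tsum {R : Type*} [Ring R] [TopologicalSpace R]
    [IsTopologicalRing R] [T2Space R] {g : ℕ → R} (hg : Summable g)
    (hg' : Summable fun r : ℕ => (r : R) * g r) :
    ∑' r : ℕ, (r : R) * (g (r - 1) - g r) = ∑' r, g r := by
  have hshift : ∀ n : ℕ, ((n + 1 : ℕ) : R) * g (n + 1 - 1) = (n : R) * g n + g n := fun n => by
    rw [Nat.add_sub_cancel]; push_cast; rw [add_mul, one_mul]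
  have hsucc : Summable fun r : ℕ => (r : R) * g (r - 1) :=
    (summable_nat_add_iff 1).1 (by simpa only [hshift] using hg'.add hg)
  simp_rw [mul_sub]
  rw [hsucc.tsum_sub hg', hsucc.tsum_eq_zero_add]
  simp only [hshift, Nat.cast_zero, zero_mul, zero_add]
  rw [hg'.tsum_add hg, add_sub_cancel_left]

def lastColOnes (s : ℕ) : Matrix (Fin (s + 1)) (Fin (s + 1)) ℝ :=
  Matrix.of fun _ j => if j = Fin.last s then 1 else 0

section AbsorbingChain

variable {s : ℕ} {M : Matrix (Fin (s + 1)) (Fin (s + 1)) ℝ}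

theorem mul_lastColOnes (hrow : ∀ i, ∑ j, M i j = 1) : M * lastColOnes s = lastColOnes s := by
  ext i j
  simp [lastColOnes, mul_apply, hrow]

theorem lastColOnes_mul (htri : ∀ i j, j < i → M i j = 0)
    (habs : M (Fin.last s) (Fin.last s) = 1) : lastColOnes s * M = lastColOnes s := by
  ext i j
  simp only [lastColOnes, mul_apply, of_apply, ite_mul, one_mul, zero_mul, sum_ite_eq', mem_univ,
    if_true]
  rcases (Fin.le_last j).lt_or_eq with hj | hj
  · simp [htri _ _ hj, hj.ne]
  · simp [hj, habs]

theorem lastColOnes_mul_self : lastColOnes s * lastColOnes s = lastColOnes s := by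
  ext i j
  simp [lastColOnes, mul_apply]

theorem blockTriangular_sub_lastColOnes (htri : ∀ i j, j < i → M i j = 0) :
    (M - lastColOnes s).BlockTriangular id := fun i j (hji : j < i) => by
  simp [lastColOnes, htri i j hji, (hji.trans_le (Fin.le_last i)).ne]

theorem abs_sub_lastColOnes_apply_self_lt_one (hnonneg : ∀ i j, 0 ≤ M i j)
    (habs : M (Fin.last s) (Fin.last s) = 1) (hdiag : ∀ i, i < Fin.last s → M i i < 1)
    (i : Fin (s + 1)) : |(M - lastColOnes s) i i| < 1 := by
  rcases (Fin.le_last i).lt_or_eq with hi | hi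
  · simpa [lastColOnes, hi.ne, abs_of_nonneg (hnonneg i i)] using hdiag i hi
  · simp [lastColOnes, hi, habs]

theorem one_sub_pow_apply_last (htri : ∀ i j, j < i → M i j = 0) (hrow : ∀ i, ∑ j, M i j = 1)
    (habs : M (Fin.last s) (Fin.last s) = 1) (r : ℕ) (i : Fin (s + 1)) :
    1 - (M ^ r) i (Fin.last s) =
      (if r = 0 then 1 else 0) - ((M - lastColOnes s) ^ r) i (Fin.last s) := by
  rcases r with _ | r
  · simp
  · rw [sub_pow_succ_of_mul_eq_self (mul_lastColOnes hrow) (lastColOnes_mul htri habs)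
      lastColOnes_mul_self]
    simp [lastColOnes]

theorem hasSum_one_sub_pow_apply_last (htri : ∀ i j, j < i → M i j = 0)
    (hnonneg : ∀ i j, 0 ≤ M i j) (hrow : ∀ i, ∑ j, M i j = 1)
    (habs : M (Fin.last s) (Fin.last s) = 1) (hdiag : ∀ i, i < Fin.last s → M i i < 1)
    (i : Fin (s + 1)) :
    HasSum (fun r => 1 - (M ^ r) i (Fin.last s))
      (1 - (∑' r, (M - lastColOnes s) ^ r) i (Fin.last s)) := by
  have hS := (blockTriangular_sub_lastColOnes htri).summable_pow
    (abs_sub_lastColOnes_apply_self_lt_one hnonneg habs hdiag)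
  simp_rw [one_sub_pow_apply_last htri hrow habs]
  exact (hasSum_ite_eq 0 1).sub (Pi.hasSum.1 (Pi.hasSum.1 hS.hasSum i) (Fin.last s))

theorem summable_natCast_mul_one_sub_pow_apply_last (htri : ∀ i j, j < i → M i j = 0)
    (hnonneg : ∀ i j, 0 ≤ M i j) (hrow : ∀ i, ∑ j, M i j = 1)
    (habs : M (Fin.last s) (Fin.last s) = 1) (hdiag : ∀ i, i < Fin.last s → M i i < 1)
    (i : Fin (s + 1)) :
    Summable fun r : ℕ => (r : ℝ) * (1 - (M ^ r) i (Fin.last s)) := by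
  refine ((blockTriangular_sub_lastColOnes htri).summable_natCast_mul_pow_apply
    (abs_sub_lastColOnes_apply_self_lt_one hnonneg habs hdiag) i (Fin.last s)).neg.congr
    fun r => ?_
  rw [one_sub_pow_apply_last htri hrow habs]
  rcases r with _ | r <;> simp

end AbsorbingChain

/-- For an upper-triangular row-stochastic matrix `M` with absorbing last state and all
other diagonal entries `< 1`, the matrix `M - 𝟙 eₛᵀ - I` is invertible and the expected
absorption time from state `1` is `((M - 𝟙 eₛᵀ - I)⁻¹)_{1,s} + 1`. -/
theorem stmt_17 (s : ℕ) (M : Matrix (Fin (s + 1)) (Fin (s + 1)) ℝ)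
    (htri : ∀ i j, j < i → M i j = 0)
    (hnonneg : ∀ i j, 0 ≤ M i j)
    (hrow : ∀ i, ∑ j, M i j = 1)
    (habs : M (Fin.last s) (Fin.last s) = 1)
    (hdiag : ∀ i, i < Fin.last s → M i i < 1)
    (N : Matrix (Fin (s + 1)) (Fin (s + 1)) ℝ)
    (hN : N = M - Matrix.of (fun _ j => if j = Fin.last s then (1 : ℝ) else 0) - 1) :
    IsUnit N ∧
    ∑' r : ℕ, (r : ℝ) * ((M ^ r) 0 (Fin.last s) - (M ^ (r - 1)) 0 (Fin.last s)) =
      N⁻¹ 0 (Fin.last s) + 1 := by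
  replace hN : N = M - lastColOnes s - 1 := hN
  have hS := (blockTriangular_sub_lastColOnes htri).summable_pow
    (abs_sub_lastColOnes_apply_self_lt_one hnonneg habs hdiag)
  have hinv : N * -∑' r, (M - lastColOnes s) ^ r = 1 := by
    rw [hN, mul_neg, ← neg_mul, neg_sub, hS.one_sub_mul_tsum_pow]
  refine ⟨(isUnit_iff_isUnit_det N).2 (isUnit_det_of_right_inverse hinv), ?_⟩
  have htail := hasSum_one_sub_pow_apply_last htri hnonneg hrow habs hdiag 0
  calc ∑' r : ℕ, (r : ℝ) * ((M ^ r) 0 (Fin.last s) - (M ^ (r - 1)) 0 (Fin.last s))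
      = ∑' r : ℕ, (r : ℝ) *
          ((1 - (M ^ (r - 1)) 0 (Fin.last s)) - (1 - (M ^ r) 0 (Fin.last s))) := by
        simp_rw [sub_sub_sub_cancel_left]
    _ = 1 - (∑' r, (M - lastColOnes s) ^ r) 0 (Fin.last s) := by
        rw [tsum_natCast_mul_sub_eq_tsum htail.summable
          (summable_natCast_mul_one_sub_pow_apply_last htri hnonneg hrow habs hdiag 0),
          htail.tsum_eq]
    _ = N⁻¹ 0 (Fin.last s) + 1 := by
        rw [inv_eq_right_inv hinv, neg_apply]
        ring
end
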